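/- arXiv:2108.08531 — 4 statements merged into one kernel-verified Lean document; each statement's English description precedes it below -/
import Mathlib

section
/- Let G = PSL(3,q) for a prime power q ≥ 2, with d = gcd(3, q−1) and α = (q² + q + 1)/d. Then α divides the order of G, and α is coprime to |G|/α. -/
/-!
Since `det : GL(3, q) → 𝔽_qˣ` is onto and the centre of `SL(3, q)` is the group of cube roots of
unity, of order `d`, we get `|GL(3, q)| = (q - 1) d |PSL(3, q)|`; comparing with
`|GL(3, q)| = q³ (q³ - 1) (q² - 1) (q - 1)` gives `|PSL(3, q)| = α q³ (q - 1)² (q + 1)`.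
As `q² + q + 1 = q (q + 1) + 1`, `α` is prime to `q (q + 1)`. For `q - 1`: if `d = 1` then
`α = (q - 1)(q + 2) + 3` and `3 ∤ q - 1`; if `d = 3` then `q = 3t + 1` and `α = 3t (t + 1) + 1`.
-/

open Matrix

namespace Nat

theorem gcd_three_sub_one_dvd {q : ℕ} (hq : q ≠ 0) : gcd 3 (q - 1) ∣ q ^ 2 + q + 1 := by
  obtain ⟨k, rfl⟩ := exists_eq_add_one_of_ne_zero hq
  rw [Nat.add_sub_cancel, show (k + 1) ^ 2 + (k + 1) + 1 = k * (k + 3) + 3 by ring]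
  exact ((gcd_dvd_right 3 k).mul_right _).add (gcd_dvd_left 3 k)

theorem coprime_sq_add_self_add_one_mul_add_one (q : ℕ) :
    Coprime (q ^ 2 + q + 1) (q * (q + 1)) := by
  rw [show q ^ 2 + q + 1 = 1 * (q * (q + 1)) + 1 by ring]
  exact (coprime_mul_right_add_left 1 _ _).2 (coprime_one_left _)

theorem coprime_div_gcd_three_sub_one {q : ℕ} (hq : q ≠ 0) :
    Coprime ((q ^ 2 + q + 1) / gcd 3 (q - 1)) (q - 1) := by
  obtain ⟨k, rfl⟩ := exists_eq_add_one_of_ne_zero hq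
  rw [Nat.add_sub_cancel]
  rcases coprime_or_dvd_of_prime prime_three k with h | ⟨t, rfl⟩
  · rw [h.gcd_eq_one, Nat.div_one, show (k + 1) ^ 2 + (k + 1) + 1 = (k + 3) * k + 3 by ring,
      coprime_mul_right_add_left]
    exact h
  · rw [gcd_mul_right_right,
      show (3 * t + 1) ^ 2 + (3 * t + 1) + 1 = 3 * ((t + 1) * (3 * t) + 1) by ring,
      Nat.mul_div_cancel_left _ three_pos]
    exact (coprime_mul_right_add_left 1 _ _).2 (coprime_one_left _)

theorem coprime_div_gcd_three_sub_one_mul {q : ℕ} (hq : q ≠ 0) :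
    Coprime ((q ^ 2 + q + 1) / gcd 3 (q - 1)) (q ^ 3 * (q - 1) ^ 2 * (q + 1)) := by
  have h_q_succ : Coprime ((q ^ 2 + q + 1) / gcd 3 (q - 1)) (q * (q + 1)) :=
    (coprime_sq_add_self_add_one_mul_add_one q).coprime_dvd_left
      (div_dvd_of_dvd (gcd_three_sub_one_dvd hq))
  have h_pred := coprime_div_gcd_three_sub_one hq
  exact ((h_q_succ.coprime_mul_right_right.pow_right 3).mul_right (h_pred.pow_right 2)).mul_right
    h_q_succ.coprime_mul_left_right

end Nat

namespace Matrix

section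

variable {n R : Type*} [Fintype n] [DecidableEq n] [CommRing R]

theorem SpecialLinearGroup.card_ker_det :
    Nat.card (GeneralLinearGroup.det : GL n R →* Rˣ).ker =
      Nat.card (SpecialLinearGroup n R) := by
  rw [← Nat.card_range_of_injective SpecialLinearGroup.toGL_injective,
    SpecialLinearGroup.range_toGL, ← MonoidHom.coe_ker]
  rfl

theorem card_GL_eq_card_units_mul_card_SL [Nonempty n] [Finite R] :
    Nat.card (GL n R) = Nat.card Rˣ * Nat.card (SpecialLinearGroup n R) := by
  rw [← (GeneralLinearGroup.det : GL n R →* Rˣ).ker.index_mul_card, Subgroup.index_ker,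
    MonoidHom.range_eq_top.2 GeneralLinearGroup.det_surjective, Subgroup.card_top,
    SpecialLinearGroup.card_ker_det]

variable {F : Type*} [Field F] [Finite F]

theorem SpecialLinearGroup.card_center [Nonempty n] :
    Nat.card (Subgroup.center (SpecialLinearGroup n F)) = (Nat.card Fˣ).gcd (Fintype.card n) := by
  rw [Nat.card_congr (center_equiv_rootsOfUnity' (Classical.arbitrary n)).toEquiv,
    rootsOfUnity_eq_ker, IsCyclic.card_powMonoidHom_ker]

theorem card_PSL_mul_eq_card_GL [Nonempty n] :
    Nat.card (ProjectiveSpecialLinearGroup n F) *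
      ((Nat.card Fˣ).gcd (Fintype.card n) * Nat.card Fˣ) = Nat.card (GL n F) := by
  rw [card_GL_eq_card_units_mul_card_SL, ← SpecialLinearGroup.card_center,
    (Subgroup.center (SpecialLinearGroup n F)).card_eq_card_quotient_mul_card_subgroup]
  ring

end

section

variable (F : Type*) [Field F] [Finite F]

local notation "q" => Nat.card F

theorem card_GL_three :
    Nat.card (GL (Fin 3) F) = (q ^ 2 + q + 1) * (q ^ 3 * (q - 1) ^ 2 * (q + 1)) * (q - 1) := by
  have := Fintype.ofFinite F
  rw [card_GL_field, Fin.prod_univ_three, ← Nat.card_eq_fintype_card]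
  obtain ⟨k, hk⟩ := Nat.exists_eq_add_one_of_ne_zero (Nat.card_pos (α := F)).ne'
  rw [hk, Nat.add_sub_cancel]
  simp only [Fin.val_zero, Fin.val_one, Fin.val_two]
  rw [Nat.sub_eq_of_eq_add (b := (k + 1) ^ 0) (c := k * ((k + 1) ^ 2 + (k + 1) + 1)) (by ring),
    Nat.sub_eq_of_eq_add (b := (k + 1) ^ 1) (c := (k + 1) * k * (k + 2)) (by ring),
    Nat.sub_eq_of_eq_add (b := (k + 1) ^ 2) (c := (k + 1) ^ 2 * k) (by ring)]
  ring

theorem card_PSL_three :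
    Nat.card (ProjectiveSpecialLinearGroup (Fin 3) F) =
      (q ^ 2 + q + 1) / Nat.gcd 3 (q - 1) * (q ^ 3 * (q - 1) ^ 2 * (q + 1)) := by
  have hq : 1 < q := Finite.one_lt_card
  have hd : 0 < Nat.gcd 3 (q - 1) * (q - 1) :=
    Nat.mul_pos (Nat.gcd_pos_of_pos_left _ three_pos) (Nat.sub_pos_of_lt hq)
  apply Nat.eq_of_mul_eq_mul_right hd
  have h := card_PSL_mul_eq_card_GL (n := Fin 3) (F := F)
  rw [Fintype.card_fin, Nat.card_units, Nat.gcd_comm] at h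
  rw [h, card_GL_three]
  conv_lhs => rw [← Nat.div_mul_cancel (Nat.gcd_three_sub_one_dvd (by omega : q ≠ 0))]
  ring

end

end Matrix

theorem stmt4_general (p n q : ℕ) (hn : 1 ≤ n) (hq : q = p ^ n)
    (hpI : Fact p.Prime)
    (α : ℕ) (hα : α = (q ^ 2 + q + 1) / Nat.gcd 3 (q - 1)) :
    α ∣ Nat.card (ProjectiveSpecialLinearGroup (Fin 3) (GaloisField p n)) ∧
      Nat.Coprime α
        (Nat.card (ProjectiveSpecialLinearGroup (Fin 3) (GaloisField p n)) / α) := by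
  have hcard : Nat.card (GaloisField p n) = q := by rw [hq, GaloisField.card p n (by omega)]
  have hq0 : q ≠ 0 := hcard ▸ Nat.card_pos.ne'
  have hα0 : 0 < α :=
    hα ▸ Nat.div_pos (Nat.le_of_dvd (by positivity) (Nat.gcd_three_sub_one_dvd hq0))
      (Nat.gcd_pos_of_pos_left _ three_pos)
  rw [card_PSL_three, hcard, ← hα, Nat.mul_div_cancel_left _ hα0]
  exact ⟨dvd_mul_right α _, hα ▸ Nat.coprime_div_gcd_three_sub_one_mul hq0⟩

theorem stmt4 (p n q : ℕ) (hp : p.Prime) (hn : 1 ≤ n) (hq : q = p ^ n)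
    (hq2 : 2 ≤ q) (hpI : Fact p.Prime)
    (α : ℕ) (hα : α = (q ^ 2 + q + 1) / Nat.gcd 3 (q - 1)) :
    α ∣ Nat.card (ProjectiveSpecialLinearGroup (Fin 3) (GaloisField p n)) ∧
      Nat.Coprime α
        (Nat.card (ProjectiveSpecialLinearGroup (Fin 3) (GaloisField p n)) / α) :=
  stmt4_general p n q hn hq hpI α hα
end

section
/- There exist elements a, b, c in the alternating group A₇ such that c has order 7, [a,b]·c = 1, and ⟨a, b, c⟩ = A₇. (Explicitly, a = (1,7,2,6)(3,5), b = (3,4,6,7,5), c = (1,2,3,4,5,7,6) work.) -/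
/-!
The 7-cycle `c` makes `⟨a, b, c⟩` transitive on seven points, hence primitive since 7 is prime,
and `(a c)²` is a 3-cycle because `a c` has cycle type `(2, 2, 3)`. By Jordan's theorem a primitive
permutation group containing a 3-cycle contains the alternating group.
-/

open Equiv Equiv.Perm
open scoped commutatorElement

theorem Subgroup.closure_eq_top_of_le_closure_image {G : Type*} [Group G] {K : Subgroup G}
    {s : Set K} (h : K ≤ Subgroup.closure (K.subtype '' s)) : Subgroup.closure s = ⊤ := by
  rw [eq_top_iff, ← Subgroup.map_subtype_le_map_subtype, ← MonoidHom.range_eq_map,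
    Subgroup.range_subtype, MonoidHom.map_closure]
  exact h

namespace Equiv.Perm

variable {α : Type*} [Fintype α] [DecidableEq α]

theorem IsCycle.isPretransitive_of_support_eq_univ {G : Subgroup (Perm α)} {g : Perm α}
    (hg : g.IsCycle) (hsupp : g.support = Finset.univ) (hgG : g ∈ G) :
    MulAction.IsPretransitive G α := by
  refine ⟨fun x y => ?_⟩
  have moves : ∀ z, g z ≠ z := fun z => mem_support.mp (hsupp ▸ Finset.mem_univ z)
  obtain ⟨i, hi⟩ := hg.exists_zpow_eq (moves x) (moves y)
  exact ⟨⟨g ^ i, zpow_mem hgG i⟩, hi⟩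

theorem alternatingGroup_le_of_isCycle_mem_of_isThreeCycle_mem
    (hp : (Fintype.card α).Prime) {G : Subgroup (Perm α)} {g h : Perm α}
    (hg : g.IsCycle) (hsupp : g.support = Finset.univ) (hgG : g ∈ G)
    (hh : h.IsThreeCycle) (hhG : h ∈ G) : alternatingGroup α ≤ G :=
  haveI := hg.isPretransitive_of_support_eq_univ hsupp hgG
  alternatingGroup_le_of_isPreprimitive_of_isThreeCycle_mem
    (.of_prime_card (by rwa [Nat.card_eq_fintype_card])) hh hhG

end Equiv.Perm

/- The paper's `a = (1,7,2,6)(3,5)`, `b = (3,4,6,7,5)`, `c = (1,2,3,4,5,7,6)`, with the points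
shifted down by one. -/
def permA : Perm (Fin 7) := c[0, 6, 1, 5] * c[2, 4]

def permB : Perm (Fin 7) := c[2, 3, 5, 6, 4]

def permC : Perm (Fin 7) := c[0, 1, 2, 3, 4, 6, 5]

theorem isCycle_permC : permC.IsCycle :=
  Cycle.isCycle_formPerm _ _ (by simp)

theorem support_permC : permC.support = Finset.univ := by decide

theorem isThreeCycle_sq_permA_mul_permC : ((permA * permC) ^ 2).IsThreeCycle :=
  card_support_eq_three_iff.mp (by decide)

theorem alternatingGroup_le_closure_permB_permA_permC :
    alternatingGroup (Fin 7) ≤ Subgroup.closure {permB, permA, permC} :=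
  alternatingGroup_le_of_isCycle_mem_of_isThreeCycle_mem (by norm_num) isCycle_permC
    support_permC (Subgroup.subset_closure (by simp)) isThreeCycle_sq_permA_mul_permC
    (pow_mem (mul_mem (Subgroup.subset_closure (by simp)) (Subgroup.subset_closure (by simp))) 2)

/- Mathlib composes permutations right to left and sets `⁅a, b⁆ = a * b * a⁻¹ * b⁻¹`; in these
conventions the paper's relation `[a, b] c = 1` reads `⁅b, a⁆ * c = 1`. -/
theorem stmt8 : ∃ a b c : alternatingGroup (Fin 7),
    orderOf c = 7 ∧ ⁅a, b⁆ * c = 1 ∧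
      Subgroup.closure ({a, b, c} : Set (alternatingGroup (Fin 7))) = ⊤ := by
  refine ⟨⟨permB, mem_alternatingGroup.mpr (by decide)⟩,
    ⟨permA, mem_alternatingGroup.mpr (by decide)⟩, ⟨permC, mem_alternatingGroup.mpr (by decide)⟩,
    ?_, ?_, ?_⟩
  · rw [Subgroup.orderOf_mk, isCycle_permC.orderOf, support_permC]
    rfl
  · exact Subtype.ext (by decide +kernel)
  · refine Subgroup.closure_eq_top_of_le_closure_image ?_
    simpa [Set.image_insert_eq] using alternatingGroup_le_closure_permB_permA_permC
end

section
/- There exist elements a, b, c in PSL(2,7), realized as the permutations (1,2,5)(3,7,8), (1,2,6,8)(3,7,5,4), (2,4,6,5,8,3,7) of 8 points, such that c has order 7, [a,b]·c = 1, and a, b, c generate the whole group. -/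
/-!
The commutator relation and the orders 3, 4, 7 of the images of `a`, `b`, `c` in `PSL(2, 7)` are
finite matrix computations. The subgroup they generate therefore has order divisible by
`lcm(3, 4, 7) = 84`, hence index at most 2 in `PSL(2, 7)`, which has order `336 / 2 = 168`.
A subgroup of index 2 would be normal, which the simplicity of `PSL(2, 7)` rules out.
-/

open Matrix
open scoped commutatorElement MatrixGroups

theorem Subgroup.eq_top_of_natCard_dvd_two_mul {G : Type*} [Group G] [IsSimpleGroup G] [Finite G]
    {H : Subgroup G} (hH : H ≠ ⊥) (h : Nat.card G ∣ 2 * Nat.card H) : H = ⊤ := by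
  have hindex : H.index ∣ 2 := by
    rw [← H.index_mul_card] at h
    exact Nat.dvd_of_mul_dvd_mul_right Nat.card_pos h
  rcases (Nat.dvd_prime Nat.prime_two).1 hindex with h1 | h2
  · exact index_eq_one.1 h1
  · exact (IsSimpleGroup.eq_bot_or_eq_top_of_normal H (normal_of_index_eq_two h2)).resolve_left hH

namespace Matrix.ProjectiveSpecialLinearGroup

variable {n R : Type*} [Fintype n] [DecidableEq n] [CommRing R]

theorem orderOf_mk_eq_prime_pow {g : SpecialLinearGroup n R} {p k : ℕ} [Fact p.Prime]
    (hk : g ^ p ^ k ∉ Subgroup.center _) (hk1 : g ^ p ^ (k + 1) ∈ Subgroup.center _) :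
    orderOf (g : ProjectiveSpecialLinearGroup n R) = p ^ (k + 1) := by
  refine orderOf_eq_prime_pow ?_ ?_ <;> rwa [← QuotientGroup.mk_pow, QuotientGroup.eq_one_iff]

theorem orderOf_mk_eq_prime {g : SpecialLinearGroup n R} {p : ℕ} [Fact p.Prime]
    (hg : g ∉ Subgroup.center _) (hp : g ^ p ∈ Subgroup.center _) :
    orderOf (g : ProjectiveSpecialLinearGroup n R) = p := by
  simpa using orderOf_mk_eq_prime_pow (k := 0) (by simpa using hg) (by simpa using hp)

theorem natCard_mul_two [IsDomain R] (hR : ringChar R ≠ 2) :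
    Nat.card PSL(2, R) * 2 = Nat.card SL(2, R) := by
  have hroots : Nat.card (rootsOfUnity 2 R) = 2 := (IsPrimitiveRoot.neg_one _ hR).card_rootsOfUnity
  have hmax : max (Fintype.card (Fin 2)) 1 = 2 := rfl
  rw [Subgroup.card_eq_card_quotient_mul_card_subgroup (Subgroup.center SL(2, R)),
    Nat.card_congr (SpecialLinearGroup.center_equiv_rootsOfUnity).toEquiv, hmax, hroots]

end Matrix.ProjectiveSpecialLinearGroup

instance Nat.fact_prime_seven : Fact (Nat.Prime 7) := ⟨by norm_num⟩

set_option maxRecDepth 10000 in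
theorem Matrix.SpecialLinearGroup.natCard_two_zmod_seven : Nat.card SL(2, ZMod 7) = 336 := by
  rw [Nat.card_eq_fintype_card]
  decide

theorem Matrix.ProjectiveSpecialLinearGroup.natCard_two_zmod_seven :
    Nat.card PSL(2, ZMod 7) = 168 := by
  have h := natCard_mul_two (R := ZMod 7) (by rw [ZMod.ringChar_zmod_n]; decide)
  rw [SpecialLinearGroup.natCard_two_zmod_seven] at h
  omega

namespace PSL27

open ProjectiveSpecialLinearGroup

/- Under the labelling `1, …, 8 ↦ 0, 1, 3, 6, 4, 2, 5, ∞` of `ℙ¹(𝔽₇)`, the Möbius maps of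
`a`, `b`, `c` are the permutations `(1,2,5)(3,7,8)`, `(1,2,6,8)(3,7,5,4)`, `(2,4,6,5,8,3,7)`. -/
def a : SL(2, ZMod 7) := ⟨!![2, 6; 3, 6], by decide⟩
def b : SL(2, ZMod 7) := ⟨!![0, 3; 2, 3], by decide⟩
def c : SL(2, ZMod 7) := ⟨!![6, 0; 2, 6], by decide⟩

/- The permutation relation `a⁻¹b⁻¹abc = 1` multiplies left to right; for Möbius maps, composed
right to left, it becomes `c ⁅b, a⁆ = 1` with Mathlib's `⁅x, y⁆ = x y x⁻¹ y⁻¹`. Hence the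
witnesses of the theorem are `(b, a, c)`. -/
theorem commutatorElement_b_a_mul_c : ⁅b, a⁆ * c = 1 := Subtype.ext (by decide)

theorem orderOf_a : orderOf (a : PSL(2, ZMod 7)) = 3 := by
  apply orderOf_mk_eq_prime <;> rw [Matrix.SpecialLinearGroup.mem_center_iff] <;> decide

theorem orderOf_b : orderOf (b : PSL(2, ZMod 7)) = 4 := by
  apply orderOf_mk_eq_prime_pow (p := 2) (k := 1) <;>
    rw [Matrix.SpecialLinearGroup.mem_center_iff] <;> decide

theorem orderOf_c : orderOf (c : PSL(2, ZMod 7)) = 7 := by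
  apply orderOf_mk_eq_prime <;> rw [Matrix.SpecialLinearGroup.mem_center_iff] <;> decide

theorem closure_eq_top :
    Subgroup.closure
      ({(b : PSL(2, ZMod 7)), (a : PSL(2, ZMod 7)), (c : PSL(2, ZMod 7))} : Set _) = ⊤ := by
  set H := Subgroup.closure
    ({(b : PSL(2, ZMod 7)), (a : PSL(2, ZMod 7)), (c : PSL(2, ZMod 7))} : Set _)
  have : IsSimpleGroup PSL(2, ZMod 7) := rank_two_simple (by simp)
  have ha : (a : PSL(2, ZMod 7)) ∈ H := Subgroup.subset_closure (by simp)
  have hb : (b : PSL(2, ZMod 7)) ∈ H := Subgroup.subset_closure (by simp)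
  have hc : (c : PSL(2, ZMod 7)) ∈ H := Subgroup.subset_closure (by simp)
  have h3 := H.orderOf_dvd_natCard ha
  have h4 := H.orderOf_dvd_natCard hb
  have h7 := H.orderOf_dvd_natCard hc
  rw [orderOf_a] at h3
  rw [orderOf_b] at h4
  rw [orderOf_c] at h7
  have h84 : 3 * 4 * 7 ∣ Nat.card H :=
    Nat.Coprime.mul_dvd_of_dvd_of_dvd (by norm_num)
      (Nat.Coprime.mul_dvd_of_dvd_of_dvd (by norm_num) h3 h4) h7
  refine Subgroup.eq_top_of_natCard_dvd_two_mul ?_ ?_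
  · intro hbot
    rw [hbot, Subgroup.mem_bot] at hc
    simpa [hc] using orderOf_c
  · rw [natCard_two_zmod_seven]
    exact Nat.mul_dvd_mul_left 2 h84

end PSL27

open PSL27 in
theorem stmt9 : ∃ a b c : ProjectiveSpecialLinearGroup (Fin 2) (ZMod 7),
    orderOf c = 7 ∧ ⁅a, b⁆ * c = 1 ∧
      Subgroup.closure
        ({a, b, c} : Set (ProjectiveSpecialLinearGroup (Fin 2) (ZMod 7))) = ⊤ := by
  refine ⟨b, a, c, orderOf_c, ?_, closure_eq_top⟩
  simpa [commutatorElement_def] using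
    congrArg ((↑) : SL(2, ZMod 7) → PSL(2, ZMod 7)) commutatorElement_b_a_mul_c
end

section
/- There exist three elements x, y, z in PSL(2,7) with o(x) = 3, o(y) = 4, o(z) = 7, x·y·z = 1, and ⟨x, y, z⟩ = PSL(2,7). (Explicitly: x = (1,8,3)(4,7,5), y = (1,2,6,8)(3,7,5,4), z = (2,3,5,4,7,8,6).) -/
/-!
Lift x, y, z to SL(2, 7); with the lifts chosen below, x y z = 1 holds already in SL(2, 7).
The order of the image of a matrix in PSL(2, 7) is the least power that is scalar, which is
checked by computation. For generation: z is the upper unitriangular transvection and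
x z y z⁻¹ x the lower one. Over a prime field every transvection is a power of one of these two,
and the transvections generate SL(2, p), hence their images generate PSL(2, p).
-/

open Matrix

open scoped MatrixGroups

namespace Matrix.SpecialLinearGroup

variable {ι R : Type*} [Fintype ι] [DecidableEq ι] [CommRing R]

theorem transvection_natCast {i j : ι} (hij : i ≠ j) (n : ℕ) :
    transvection hij (n : R) = transvection hij 1 ^ n := by
  induction n with
  | zero => simp
  | succ n ih => rw [Nat.cast_succ, transvection_add, ih, pow_succ]

theorem SL2_closure_transvection_one_eq_top (p : ℕ) [Fact p.Prime] :
    Subgroup.closure {transvection (zero_ne_one (α := Fin 2)) (1 : ZMod p),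
      transvection (one_ne_zero (α := Fin 2)) 1} = ⊤ := by
  refine eq_top_iff.2 fun A _ ↦ SL2.transvection_induction _ (fun i j hij c ↦ ?_)
    (fun _ _ ↦ mul_mem) A
  rw [← ZMod.natCast_zmod_val c, transvection_natCast]
  refine pow_mem (Subgroup.subset_closure ?_) _
  fin_cases i <;> fin_cases j <;> simp at hij ⊢

end Matrix.SpecialLinearGroup

namespace Matrix.ProjectiveSpecialLinearGroup

variable {ι R : Type*} [Fintype ι] [DecidableEq ι] [CommRing R]

theorem coe_eq_one_iff {A : SpecialLinearGroup ι R} :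
    (A : ProjectiveSpecialLinearGroup ι R) = 1 ↔
      ∃ r : R, r ^ Fintype.card ι = 1 ∧ scalar ι r = A := by
  rw [QuotientGroup.eq_one_iff, SpecialLinearGroup.mem_center_iff]

theorem orderOf_coe_eq_prime_pow {A : SpecialLinearGroup ι R} {p k : ℕ} [Fact p.Prime]
    (hnot : ¬∃ r : R, r ^ Fintype.card ι = 1 ∧ scalar ι r = ↑(A ^ p ^ k))
    (hpow : ∃ r : R, r ^ Fintype.card ι = 1 ∧ scalar ι r = ↑(A ^ p ^ (k + 1))) :
    orderOf (A : ProjectiveSpecialLinearGroup ι R) = p ^ (k + 1) := by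
  refine orderOf_eq_prime_pow ?_ ?_ <;>
    rwa [← QuotientGroup.mk_pow, coe_eq_one_iff]

theorem PSL2_closure_transvection_one_eq_top (p : ℕ) [Fact p.Prime] :
    Subgroup.closure
      {((SpecialLinearGroup.transvection zero_ne_one 1 : SL(2, ZMod p)) : PSL(2, ZMod p)),
        ((SpecialLinearGroup.transvection one_ne_zero 1 : SL(2, ZMod p)) : PSL(2, ZMod p))} =
      ⊤ := by
  rw [← Set.image_pair, ← QuotientGroup.coe_mk', ← MonoidHom.map_closure,
    SpecialLinearGroup.SL2_closure_transvection_one_eq_top, Subgroup.map_top_of_surjective]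
  exact QuotientGroup.mk'_surjective _

end Matrix.ProjectiveSpecialLinearGroup

namespace PSL27

open SpecialLinearGroup

instance : Fact (Nat.Prime 7) := ⟨by norm_num⟩

def x : SL(2, ZMod 7) := ⟨!![0, 2; 3, 1], by decide⟩

def y : SL(2, ZMod 7) := ⟨!![1, 4; 4, 3], by decide⟩

def z : SL(2, ZMod 7) := transvection zero_ne_one 1

theorem x_mul_y_mul_z : x * y * z = 1 := by decide

theorem lower_transvection_eq : x * z * y * z⁻¹ * x = transvection one_ne_zero 1 := by decide

end PSL27

open PSL27 Matrix.ProjectiveSpecialLinearGroup in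
theorem stmt12 : ∃ x y z : ProjectiveSpecialLinearGroup (Fin 2) (ZMod 7),
    orderOf x = 3 ∧ orderOf y = 4 ∧ orderOf z = 7 ∧ x * y * z = 1 ∧
      Subgroup.closure
        ({x, y, z} : Set (ProjectiveSpecialLinearGroup (Fin 2) (ZMod 7))) = ⊤ := by
  refine ⟨x, y, z, ?_, ?_, ?_, ?_, ?_⟩
  · exact orderOf_coe_eq_prime_pow (p := 3) (k := 0) (by decide) (by decide)
  · exact orderOf_coe_eq_prime_pow (p := 2) (k := 1) (by decide) (by decide)
  · exact orderOf_coe_eq_prime_pow (p := 7) (k := 0) (by decide) (by decide)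
  · simp only [← QuotientGroup.mk_mul, x_mul_y_mul_z, QuotientGroup.mk_one]
  · set H := Subgroup.closure ({↑x, ↑y, ↑z} : Set PSL(2, ZMod 7))
    have hx : (x : PSL(2, ZMod 7)) ∈ H := Subgroup.subset_closure (by simp)
    have hy : (y : PSL(2, ZMod 7)) ∈ H := Subgroup.subset_closure (by simp)
    have hz : (z : PSL(2, ZMod 7)) ∈ H := Subgroup.subset_closure (by simp)
    have hlower : ((SpecialLinearGroup.transvection one_ne_zero 1 : SL(2, ZMod 7)) :
        PSL(2, ZMod 7)) ∈ H := by
      rw [← lower_transvection_eq]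
      exact mul_mem (mul_mem (mul_mem (mul_mem hx hz) hy) (inv_mem hz)) hx
    rw [eq_top_iff, ← PSL2_closure_transvection_one_eq_top, Subgroup.closure_le]
    exact Set.pair_subset hz hlower
end
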